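/- arXiv:1301.3245 — 7 statements merged into one kernel-verified Lean document; each statement's English description precedes it below -/
import Mathlib

section
/- Conversely, if z : ℝ → ℝ is a twice-differentiable solution of z'' + c·z' + b·d·exp(2z) = a·c + b·f(t), then x(t) := exp(z(t)) and y(t) := (a − z'(t))/b define a solution of the system x' = a·x − b·x·y, y' = −c·y + d·x² − f(t) with x(t) > 0 for all t. -/
theorem stmt1_general (a b c d : ℝ) (hb : 0 < b)
    (f : ℝ → ℝ)
    (z z' z'' : ℝ → ℝ)
    (hz1 : ∀ t, HasDerivAt z (z' t) t)
    (hz2 : ∀ t, HasDerivAt z' (z'' t) t)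
    (heq : ∀ t, z'' t + c * z' t + b * d * Real.exp (2 * z t) = a * c + b * f t) :
    ∀ t,
      HasDerivAt (fun s => Real.exp (z s))
        (a * Real.exp (z t) - b * Real.exp (z t) * ((a - z' t) / b)) t ∧
      HasDerivAt (fun s => (a - z' s) / b)
        (-c * ((a - z' t) / b) + d * (Real.exp (z t)) ^ 2 - f t) t ∧
      0 < Real.exp (z t) := by
  intro t
  have hb₀ : b ≠ 0 := hb.ne'
  refine ⟨?_, ?_, Real.exp_pos _⟩
  · convert (hz1 t).exp using 1
    field_simp
    ring
  · refine (((hz2 t).const_sub a).div_const b).congr_deriv ?_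
    rw [sq, ← Real.exp_add, ← two_mul]
    field_simp
    linear_combination -heq t

theorem stmt1 (a b c d : ℝ) (ha : 0 < a) (hb : 0 < b) (hc : 0 < c) (hd : 0 < d)
    (f : ℝ → ℝ) (hf : Continuous f)
    (z z' z'' : ℝ → ℝ)
    (hz1 : ∀ t, HasDerivAt z (z' t) t)
    (hz2 : ∀ t, HasDerivAt z' (z'' t) t)
    (heq : ∀ t, z'' t + c * z' t + b * d * Real.exp (2 * z t) = a * c + b * f t) :
    ∀ t,
      HasDerivAt (fun s => Real.exp (z s))
        (a * Real.exp (z t) - b * Real.exp (z t) * ((a - z' t) / b)) t ∧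
      HasDerivAt (fun s => (a - z' s) / b)
        (-c * ((a - z' t) / b) + d * (Real.exp (z t)) ^ 2 - f t) t ∧
      0 < Real.exp (z t) :=
  stmt1_general a b c d hb f z z' z'' hz1 hz2 heq
end

section
/- If z is a T-periodic C² solution of z'' + c·z' + b·d·exp(2z) = a·c + b·f(t), then the L²-norm of z' over one period satisfies ‖z'‖₂ ≤ (b/c)·‖f‖₂, where ‖g‖₂ = (∫₀ᵀ g(t)² dt)^{1/2}. -/
/-! Multiplying the equation by `z'` turns every term except `c z'²` and `b f z'` into the
derivative of a `T`-periodic function (`z'²/2`, `e^{2z}/2` and `z`), whose integral over a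
period vanishes. Hence `c ‖z'‖₂² = b ∫ f z' ≤ b ‖f‖₂ ‖z'‖₂` by Cauchy–Schwarz. -/

open MeasureTheory

theorem MeasureTheory.integral_mul_sq_le_sq_mul_sq {α : Type*} [MeasurableSpace α] {μ : Measure α}
    {f g : α → ℝ} (hf : Integrable (fun x => f x ^ 2) μ) (hg : Integrable (fun x => g x ^ 2) μ)
    (hfg : Integrable (fun x => f x * g x) μ) :
    (∫ x, f x * g x ∂μ) ^ 2 ≤ (∫ x, f x ^ 2 ∂μ) * ∫ x, g x ^ 2 ∂μ := by
  have hquad : ∀ s : ℝ, 0 ≤ (∫ x, g x ^ 2 ∂μ) * (s * s) + (-2 * ∫ x, f x * g x ∂μ) * s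
      + ∫ x, f x ^ 2 ∂μ := by
    intro s
    have hexpand : ∫ x, (f x - s * g x) ^ 2 ∂μ
        = ∫ x, f x ^ 2 - (2 * s) * (f x * g x) + (s * s) * g x ^ 2 ∂μ :=
      integral_congr_ae (Filter.Eventually.of_forall fun x => by ring)
    rw [integral_add (f := fun x => f x ^ 2 - (2 * s) * (f x * g x))
        (hf.sub (hfg.const_mul _)) (hg.const_mul _),
      integral_sub hf (hfg.const_mul _), integral_const_mul, integral_const_mul] at hexpand
    linarith [integral_nonneg (μ := μ) (f := fun x => (f x - s * g x) ^ 2) fun x => sq_nonneg _]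
  have hdiscrim := discrim_le_zero hquad
  rw [discrim] at hdiscrim
  linarith

theorem intervalIntegral.integral_mul_sq_le_sq_mul_sq {a b : ℝ} (hab : a ≤ b) {f g : ℝ → ℝ}
    (hf : IntervalIntegrable (fun x => f x ^ 2) volume a b)
    (hg : IntervalIntegrable (fun x => g x ^ 2) volume a b)
    (hfg : IntervalIntegrable (fun x => f x * g x) volume a b) :
    (∫ x in a..b, f x * g x) ^ 2 ≤ (∫ x in a..b, f x ^ 2) * ∫ x in a..b, g x ^ 2 := by
  simp only [intervalIntegral.integral_of_le hab]
  exact MeasureTheory.integral_mul_sq_le_sq_mul_sq hf.1 hg.1 hfg.1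

theorem Function.Periodic.of_hasDerivAt {z z' : ℝ → ℝ} {T : ℝ} (hz : Function.Periodic z T)
    (hderiv : ∀ t, HasDerivAt z (z' t) t) : Function.Periodic z' T := by
  intro t
  have hshift : HasDerivAt (fun s => z (s + T)) (z' (t + T)) t :=
    (hderiv (t + T)).comp_add_const t T
  rw [show (fun s => z (s + T)) = z from funext hz] at hshift
  exact hshift.unique (hderiv t)

theorem Function.Periodic.intervalIntegral_deriv_eq_zero {E : Type*} [NormedAddCommGroup E]
    [NormedSpace ℝ E] [CompleteSpace E] {F F' : ℝ → E} {T : ℝ} (hF : Function.Periodic F T)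
    (hderiv : ∀ t, HasDerivAt F (F' t) t) (hint : IntervalIntegrable F' volume 0 T) :
    ∫ t in (0 : ℝ)..T, F' t = 0 := by
  rw [intervalIntegral.integral_eq_sub_of_hasDerivAt (fun t _ => hderiv t) hint,
    hF.eq, sub_self]

theorem integral_sq_deriv_eq_of_periodic_solution {a b c d T : ℝ} {f z z' z'' : ℝ → ℝ}
    (hf : Continuous f) (hz1 : ∀ t, HasDerivAt z (z' t) t) (hz2 : ∀ t, HasDerivAt z' (z'' t) t)
    (hzper : Function.Periodic z T)
    (heq : ∀ t, z'' t + c * z' t + b * d * Real.exp (2 * z t) = a * c + b * f t) :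
    c * ∫ t in (0 : ℝ)..T, z' t ^ 2 = b * ∫ t in (0 : ℝ)..T, f t * z' t := by
  have hz'c : Continuous z' := continuous_iff_continuousAt.mpr fun t => (hz2 t).continuousAt
  have hz'per : Function.Periodic z' T := hzper.of_hasDerivAt hz1
  set F : ℝ → ℝ := fun t => a * c * z t - z' t ^ 2 / 2 - b * d * Real.exp (2 * z t) / 2
  have hFper : Function.Periodic F T := fun t => by simp only [F, hzper t, hz'per t]
  have hFderiv : ∀ t, HasDerivAt F (c * z' t ^ 2 - b * (f t * z' t)) t := by
    intro t
    have := ((((hz1 t).const_mul (a * c)).sub (((hz2 t).pow 2).div_const 2)).sub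
      (((((hz1 t).const_mul 2).exp).const_mul (b * d)).div_const 2))
    exact this.congr_deriv (by linear_combination -z' t * heq t)
  have hint : ∀ {g : ℝ → ℝ}, Continuous g → IntervalIntegrable g volume 0 T :=
    fun hg => hg.intervalIntegrable 0 T
  have hzero := hFper.intervalIntegral_deriv_eq_zero hFderiv (hint (by fun_prop))
  rw [intervalIntegral.integral_sub (hint (by fun_prop)) (hint (by fun_prop)),
    intervalIntegral.integral_const_mul, intervalIntegral.integral_const_mul] at hzero
  linarith

theorem stmt4_general (a b c d T : ℝ) (hb : 0 < b) (hc : 0 < c)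
    (hT : 0 < T) (f : ℝ → ℝ) (hf : Continuous f)
    (z z' z'' : ℝ → ℝ)
    (hz1 : ∀ t, HasDerivAt z (z' t) t)
    (hz2 : ∀ t, HasDerivAt z' (z'' t) t)
    (hzper : Function.Periodic z T)
    (heq : ∀ t, z'' t + c * z' t + b * d * Real.exp (2 * z t) = a * c + b * f t) :
    Real.sqrt (∫ t in (0 : ℝ)..T, (z' t) ^ 2)
      ≤ (b / c) * Real.sqrt (∫ t in (0 : ℝ)..T, (f t) ^ 2) := by
  have hz'c : Continuous z' := continuous_iff_continuousAt.mpr fun t => (hz2 t).continuousAt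
  set I := ∫ t in (0 : ℝ)..T, z' t ^ 2
  set K := ∫ t in (0 : ℝ)..T, f t ^ 2
  have hI : 0 ≤ I := intervalIntegral.integral_nonneg hT.le fun t _ => sq_nonneg _
  have henergy : c * I = b * ∫ t in (0 : ℝ)..T, f t * z' t :=
    integral_sq_deriv_eq_of_periodic_solution hf hz1 hz2 hzper heq
  have hCS : (∫ t in (0 : ℝ)..T, f t * z' t) ≤ √K * √I := by
    rw [← Real.sqrt_mul (intervalIntegral.integral_nonneg hT.le fun t _ => sq_nonneg _)]
    exact (le_abs_self _).trans <| Real.abs_le_sqrt <|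
      intervalIntegral.integral_mul_sq_le_sq_mul_sq hT.le
        ((hf.pow 2).intervalIntegrable _ _) ((hz'c.pow 2).intervalIntegrable _ _)
        ((hf.mul hz'c).intervalIntegrable _ _)
  have hsq : c * √I * √I ≤ b * √K * √I := by
    rw [mul_assoc, Real.mul_self_sqrt hI, henergy, mul_assoc]
    exact mul_le_mul_of_nonneg_left hCS hb.le
  rw [div_mul_eq_mul_div, le_div_iff₀ hc]
  rcases (Real.sqrt_nonneg I).eq_or_lt with hzero | hpos
  · rw [← hzero, zero_mul]; positivity
  · linarith [le_of_mul_le_mul_right hsq hpos]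

theorem stmt4 (a b c d T : ℝ) (ha : 0 < a) (hb : 0 < b) (hc : 0 < c) (hd : 0 < d)
    (hT : 0 < T) (f : ℝ → ℝ) (hf : Continuous f) (hfper : Function.Periodic f T)
    (hfmean : ∫ t in (0 : ℝ)..T, f t = 0)
    (z z' z'' : ℝ → ℝ)
    (hz1 : ∀ t, HasDerivAt z (z' t) t)
    (hz2 : ∀ t, HasDerivAt z' (z'' t) t)
    (hz''cont : Continuous z'')
    (hzper : Function.Periodic z T)
    (heq : ∀ t, z'' t + c * z' t + b * d * Real.exp (2 * z t) = a * c + b * f t) :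
    Real.sqrt (∫ t in (0 : ℝ)..T, (z' t) ^ 2)
      ≤ (b / c) * Real.sqrt (∫ t in (0 : ℝ)..T, (f t) ^ 2) :=
  stmt4_general a b c d T hb hc hT f hf z z' z'' hz1 hz2 hzper heq
end

section
/- Let z be a T-periodic C² solution of z'' + c·z' + b·d·exp(2z) = a·c + b·f(t). Then for all t, (1/2)·log(a·c/(b·d)) − (√T/2)·(b/c)·‖f‖₂ ≤ z(t) ≤ (1/2)·log(a·c/(b·d)) + (√T/2)·(b/c)·‖f‖₂, where ‖f‖₂ = (∫₀ᵀ f²)^{1/2}. -/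
/-!
Integrating the equation over a period kills `z''` and `c z'` (they are derivatives of periodic
functions) and the mean-zero `f`, so `exp (2 z)` has mean `a c / (b d)` and, by the mean value
theorem for integrals, `z t₀ = ½ log (a c / (b d))` for some `t₀`. Multiplying the equation by
`z'` and integrating, every term except `c z'²` and `b f z'` is again an exact derivative, so
Cauchy–Schwarz gives `‖z'‖₂ ≤ (b / c) ‖f‖₂`. Finally a periodic function returns to its value
at `t₀` after one period, so going both ways around `[t₀, t₀ + T]` bounds `2 |z t - z t₀|` by
`∫ |z'| ≤ √T ‖z'‖₂`.
-/

open MeasureTheory Set Function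

theorem integral_mul_le_sqrt_integral_sq_mul_sqrt_integral_sq {α : Type*} [MeasurableSpace α]
    {μ : Measure α} {u v : α → ℝ} (hu : MemLp u 2 μ) (hv : MemLp v 2 μ) :
    ∫ x, u x * v x ∂μ ≤ √(∫ x, u x ^ 2 ∂μ) * √(∫ x, v x ^ 2 ∂μ) := by
  have hu' : MemLp u (ENNReal.ofReal 2) μ := by simpa using hu
  have hv' : MemLp v (ENNReal.ofReal 2) μ := by simpa using hv
  calc ∫ x, u x * v x ∂μ ≤ ∫ x, ‖u x‖ * ‖v x‖ ∂μ :=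
        integral_mono (hu.integrable_mul hv) (hu.norm.integrable_mul hv.norm)
          fun x => by simpa [abs_mul] using le_abs_self (u x * v x)
    _ ≤ (∫ x, ‖u x‖ ^ (2:ℝ) ∂μ) ^ (1 / (2:ℝ)) * (∫ x, ‖v x‖ ^ (2:ℝ) ∂μ) ^ (1 / (2:ℝ)) :=
        integral_mul_norm_le_Lp_mul_Lq .two_two hu' hv'
    _ = √(∫ x, u x ^ 2 ∂μ) * √(∫ x, v x ^ 2 ∂μ) := by
        simp only [Real.rpow_two, Real.norm_eq_abs, sq_abs, Real.sqrt_eq_rpow, one_div]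

theorem intervalIntegral_mul_le_sqrt_mul_sqrt {u v : ℝ → ℝ} (hu : Continuous u)
    (hv : Continuous v) {A B : ℝ} (hAB : A ≤ B) :
    ∫ t in A..B, u t * v t ≤ √(∫ t in A..B, u t ^ 2) * √(∫ t in A..B, v t ^ 2) := by
  have memLp : ∀ w : ℝ → ℝ, Continuous w → MemLp w 2 (volume.restrict (Ioc A B)) :=
    fun w hw =>
      (memLp_two_iff_integrable_sq hw.aestronglyMeasurable).2 (hw.pow 2).integrableOn_Ioc
  simp only [intervalIntegral.integral_of_le hAB]
  exact integral_mul_le_sqrt_integral_sq_mul_sqrt_integral_sq (memLp u hu) (memLp v hv)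

theorem two_mul_abs_sub_le_integral_abs_deriv {g g' : ℝ → ℝ} {A t B : ℝ} (hAt : A ≤ t)
    (htB : t ≤ B) (hgAB : g A = g B) (hderiv : ∀ x, HasDerivAt g (g' x) x)
    (hg' : Continuous g') :
    2 * |g t - g A| ≤ ∫ x in A..B, |g' x| := by
  have ftc : ∀ x y, ∫ r in x..y, g' r = g y - g x := fun x y =>
    intervalIntegral.integral_eq_sub_of_hasDerivAt (fun r _ => hderiv r)
      (hg'.intervalIntegrable x y)
  have left : |g t - g A| ≤ ∫ x in A..t, |g' x| := by
    rw [← ftc]; exact intervalIntegral.abs_integral_le_integral_abs hAt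
  have right : |g t - g A| ≤ ∫ x in t..B, |g' x| := by
    rw [abs_sub_comm, hgAB, ← ftc]; exact intervalIntegral.abs_integral_le_integral_abs htB
  rw [← intervalIntegral.integral_add_adjacent_intervals (hg'.abs.intervalIntegrable A t)
    (hg'.abs.intervalIntegrable t B)]
  linarith

namespace Function.Periodic

variable {g g' : ℝ → ℝ} {T : ℝ}

theorem periodic_of_hasDerivAt (hg : Periodic g T) (hderiv : ∀ t, HasDerivAt g (g' t) t) :
    Periodic g' T := fun t => by
  have hshift : HasDerivAt (fun s => g (s + T)) (g' (t + T)) t := by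
    simpa using (hderiv (t + T)).comp_add_const t T
  rw [show (fun s => g (s + T)) = g from funext hg] at hshift
  exact hshift.unique (hderiv t)

theorem intervalIntegral_eq_zero_of_hasDerivAt (hg : Periodic g T)
    (hderiv : ∀ t, HasDerivAt g (g' t) t) (hint : IntervalIntegrable g' volume 0 T) :
    ∫ t in (0 : ℝ)..T, g' t = 0 := by
  rw [intervalIntegral.integral_eq_sub_of_hasDerivAt (fun t _ => hderiv t) hint,
    show T = 0 + T by ring, hg 0, sub_self]

theorem abs_sub_le_sqrt_mul_sqrt_integral_deriv_sq (hg : Periodic g T) (hT : 0 < T)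
    (hderiv : ∀ x, HasDerivAt g (g' x) x) (hg' : Continuous g') (s t : ℝ) :
    |g t - g s| ≤ √T / 2 * √(∫ r in (0 : ℝ)..T, g' r ^ 2) := by
  obtain ⟨t₁, ⟨hst₁, ht₁T⟩, hgt⟩ := hg.exists_mem_Ico hT t s
  have hsq : ∫ r in s..s + T, g' r ^ 2 = ∫ r in (0 : ℝ)..T, g' r ^ 2 := by
    simpa using ((hg.periodic_of_hasDerivAt hderiv).comp (· ^ 2)).intervalIntegral_add_eq s 0
  have cauchySchwarz : ∫ r in s..s + T, |g' r| ≤ √T * √(∫ r in (0 : ℝ)..T, g' r ^ 2) := by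
    simpa [sq_abs, hsq] using
      intervalIntegral_mul_le_sqrt_mul_sqrt (u := fun _ => 1) continuous_const hg'.abs
        (by linarith : s ≤ s + T)
  have := two_mul_abs_sub_le_integral_abs_deriv hst₁ ht₁T.le (hg s).symm hderiv hg'
  rw [hgt]
  linarith

end Function.Periodic

section PeriodicSolution

variable {a b c d T : ℝ} {f z z' z'' : ℝ → ℝ}

theorem integral_exp_two_mul_eq (hf : Continuous f) (hfmean : ∫ t in (0 : ℝ)..T, f t = 0)
    (hz1 : ∀ t, HasDerivAt z (z' t) t) (hz2 : ∀ t, HasDerivAt z' (z'' t) t)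
    (hz'' : Continuous z'') (hzper : Periodic z T)
    (heq : ∀ t, z'' t + c * z' t + b * d * Real.exp (2 * z t) = a * c + b * f t) :
    b * d * ∫ t in (0 : ℝ)..T, Real.exp (2 * z t) = a * c * T := by
  have hz' : Continuous z' := Differentiable.continuous fun t => (hz2 t).differentiableAt
  have hz'per := hzper.periodic_of_hasDerivAt hz1
  have hconserved : ∫ t in (0 : ℝ)..T, (z'' t + c * z' t) = 0 :=
    Periodic.intervalIntegral_eq_zero_of_hasDerivAt (T := T) (g := fun t => z' t + c * z t)
      (fun t => by simp only [hzper t, hz'per t]) (fun t => (hz2 t).add ((hz1 t).const_mul c))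
      ((by fun_prop : Continuous fun t => z'' t + c * z' t).intervalIntegrable _ _)
  calc b * d * ∫ t in (0 : ℝ)..T, Real.exp (2 * z t)
      = ∫ t in (0 : ℝ)..T, ((a * c + b * f t) - (z'' t + c * z' t)) := by
        rw [← intervalIntegral.integral_const_mul]
        exact intervalIntegral.integral_congr fun t _ => by linarith [heq t]
    _ = a * c * T := by
        rw [intervalIntegral.integral_sub
          ((by fun_prop : Continuous fun t => a * c + b * f t).intervalIntegrable _ _)
          ((by fun_prop : Continuous fun t => z'' t + c * z' t).intervalIntegrable _ _),
          intervalIntegral.integral_add intervalIntegrable_const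
            ((hf.const_mul b).intervalIntegrable _ _),
          intervalIntegral.integral_const_mul b, hfmean, hconserved]
        simp only [intervalIntegral.integral_const, smul_eq_mul]
        ring

theorem integral_deriv_sq_eq (hf : Continuous f)
    (hz1 : ∀ t, HasDerivAt z (z' t) t) (hz2 : ∀ t, HasDerivAt z' (z'' t) t)
    (hzper : Periodic z T)
    (heq : ∀ t, z'' t + c * z' t + b * d * Real.exp (2 * z t) = a * c + b * f t) :
    c * ∫ t in (0 : ℝ)..T, z' t ^ 2 = b * ∫ t in (0 : ℝ)..T, f t * z' t := by
  have hz' : Continuous z' := Differentiable.continuous fun t => (hz2 t).differentiableAt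
  have hz'per := hzper.periodic_of_hasDerivAt hz1
  have hconserved : ∫ t in (0 : ℝ)..T, (c * z' t ^ 2 - b * (f t * z' t)) = 0 :=
    Periodic.intervalIntegral_eq_zero_of_hasDerivAt
      (T := T) (g := fun t => a * c * z t - z' t ^ 2 / 2 - b * d / 2 * Real.exp (2 * z t))
      (fun t => by simp only [hzper t, hz'per t])
      (fun t => ((((hz1 t).const_mul (a * c)).sub (((hz2 t).pow 2).div_const 2)).sub
        (((hz1 t).const_mul 2).exp.const_mul (b * d / 2))).congr_deriv
          (by linear_combination (-z' t) * heq t))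
      ((by fun_prop : Continuous fun t => c * z' t ^ 2 - b * (f t * z' t)).intervalIntegrable _ _)
  rw [intervalIntegral.integral_sub
    ((by fun_prop : Continuous fun t => c * z' t ^ 2).intervalIntegrable _ _)
    ((by fun_prop : Continuous fun t => b * (f t * z' t)).intervalIntegrable _ _),
    intervalIntegral.integral_const_mul, intervalIntegral.integral_const_mul] at hconserved
  linarith

theorem sqrt_integral_deriv_sq_le (hb : 0 ≤ b) (hc : 0 < c) (hT : 0 ≤ T) (hf : Continuous f)
    (hz1 : ∀ t, HasDerivAt z (z' t) t) (hz2 : ∀ t, HasDerivAt z' (z'' t) t)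
    (hzper : Periodic z T)
    (heq : ∀ t, z'' t + c * z' t + b * d * Real.exp (2 * z t) = a * c + b * f t) :
    √(∫ t in (0 : ℝ)..T, z' t ^ 2) ≤ b / c * √(∫ t in (0 : ℝ)..T, f t ^ 2) := by
  have hz' : Continuous z' := Differentiable.continuous fun t => (hz2 t).differentiableAt
  set E := ∫ t in (0 : ℝ)..T, z' t ^ 2
  set K := √(∫ t in (0 : ℝ)..T, f t ^ 2)
  have hE : 0 ≤ E := intervalIntegral.integral_nonneg hT fun t _ => sq_nonneg (z' t)
  have henergy : c * √E * √E ≤ b * K * √E := by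
    rw [mul_assoc, Real.mul_self_sqrt hE, integral_deriv_sq_eq hf hz1 hz2 hzper heq, mul_assoc]
    exact mul_le_mul_of_nonneg_left (intervalIntegral_mul_le_sqrt_mul_sqrt hf hz' hT) hb
  rw [div_mul_eq_mul_div, le_div_iff₀ hc, mul_comm]
  rcases (Real.sqrt_nonneg E).eq_or_lt with hzero | hpos
  · rw [← hzero, mul_zero]; positivity
  · exact le_of_mul_le_mul_right henergy hpos

theorem exists_exp_two_mul_eq (hb : 0 < b) (hd : 0 < d) (hT : 0 < T) (hf : Continuous f)
    (hfmean : ∫ t in (0 : ℝ)..T, f t = 0)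
    (hz1 : ∀ t, HasDerivAt z (z' t) t) (hz2 : ∀ t, HasDerivAt z' (z'' t) t)
    (hz'' : Continuous z'') (hzper : Periodic z T)
    (heq : ∀ t, z'' t + c * z' t + b * d * Real.exp (2 * z t) = a * c + b * f t) :
    ∃ t₀, Real.exp (2 * z t₀) = a * c / (b * d) := by
  have hz : Continuous z := Differentiable.continuous fun t => (hz1 t).differentiableAt
  obtain ⟨t₀, -, ht₀⟩ := exists_eq_interval_average hT.ne
    (by fun_prop : Continuous fun t => Real.exp (2 * z t)).continuousOn
  refine ⟨t₀, ?_⟩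
  rw [ht₀, interval_average_eq_div, sub_zero, div_eq_div_iff hT.ne' (by positivity)]
  linarith [integral_exp_two_mul_eq hf hfmean hz1 hz2 hz'' hzper heq]

end PeriodicSolution

theorem stmt5_general (a b c d T : ℝ) (hb : 0 < b) (hc : 0 < c) (hd : 0 < d)
    (hT : 0 < T) (f : ℝ → ℝ) (hf : Continuous f)
    (hfmean : ∫ t in (0 : ℝ)..T, f t = 0)
    (z z' z'' : ℝ → ℝ)
    (hz1 : ∀ t, HasDerivAt z (z' t) t)
    (hz2 : ∀ t, HasDerivAt z' (z'' t) t)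
    (hz''cont : Continuous z'')
    (hzper : Function.Periodic z T)
    (heq : ∀ t, z'' t + c * z' t + b * d * Real.exp (2 * z t) = a * c + b * f t) :
    ∀ t,
      (1 / 2) * Real.log (a * c / (b * d))
          - (Real.sqrt T / 2) * (b / c) * Real.sqrt (∫ s in (0 : ℝ)..T, (f s) ^ 2)
        ≤ z t ∧
      z t ≤ (1 / 2) * Real.log (a * c / (b * d))
          + (Real.sqrt T / 2) * (b / c) * Real.sqrt (∫ s in (0 : ℝ)..T, (f s) ^ 2) := by
  intro t
  obtain ⟨t₀, ht₀⟩ := exists_exp_two_mul_eq hb hd hT hf hfmean hz1 hz2 hz''cont hzper heq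
  have hzt₀ : z t₀ = 1 / 2 * Real.log (a * c / (b * d)) := by
    rw [← ht₀, Real.log_exp]; ring
  have hz' : Continuous z' := Differentiable.continuous fun t => (hz2 t).differentiableAt
  have hosc : |z t - z t₀| ≤ √T / 2 * (b / c) * √(∫ s in (0 : ℝ)..T, f s ^ 2) := by
    rw [mul_assoc]
    exact (hzper.abs_sub_le_sqrt_mul_sqrt_integral_deriv_sq hT hz1 hz' t₀ t).trans <|
      mul_le_mul_of_nonneg_left (sqrt_integral_deriv_sq_le hb.le hc hT.le hf hz1 hz2 hzper heq)
        (by positivity)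
  rw [hzt₀] at hosc
  constructor <;> linarith [abs_le.mp hosc]

theorem stmt5 (a b c d T : ℝ) (ha : 0 < a) (hb : 0 < b) (hc : 0 < c) (hd : 0 < d)
    (hT : 0 < T) (f : ℝ → ℝ) (hf : Continuous f) (hfper : Function.Periodic f T)
    (hfmean : ∫ t in (0 : ℝ)..T, f t = 0)
    (z z' z'' : ℝ → ℝ)
    (hz1 : ∀ t, HasDerivAt z (z' t) t)
    (hz2 : ∀ t, HasDerivAt z' (z'' t) t)
    (hz''cont : Continuous z'')
    (hzper : Function.Periodic z T)
    (heq : ∀ t, z'' t + c * z' t + b * d * Real.exp (2 * z t) = a * c + b * f t) :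
    ∀ t,
      (1 / 2) * Real.log (a * c / (b * d))
          - (Real.sqrt T / 2) * (b / c) * Real.sqrt (∫ s in (0 : ℝ)..T, (f s) ^ 2)
        ≤ z t ∧
      z t ≤ (1 / 2) * Real.log (a * c / (b * d))
          + (Real.sqrt T / 2) * (b / c) * Real.sqrt (∫ s in (0 : ℝ)..T, (f s) ^ 2) :=
  stmt5_general a b c d T hb hc hd hT f hf hfmean z z' z'' hz1 hz2 hz''cont hzper heq
end

section
/- Let (x, y) be a T-periodic solution of x' = a·x − b·x·y, y' = −c·y + d·x² − f(t) with x(t) > 0 for all t. Then for all t: (a/b)·(1 − cT) − ‖f⁺‖₁ ≤ y(t) ≤ (a/b)·(1 + cT) + ‖f⁻‖₁, where f⁺ = max(f, 0), f⁻ = max(−f, 0), and ‖g‖₁ = ∫₀ᵀ |g(t)| dt. -/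
/-!
Since `log x` is `T`-periodic with derivative `a - b y`, the mean of `y` over a period is
`m = a / b`; since `y` is periodic and `f` has zero mean, the mean of `d x²` is then `c m`.
So in every window `[t - T, t]` the solution `y` takes values on both sides of `m`. From the last
time `t₁ ≤ t` at which `y` is on the other side of `m`, integrate the one-sided bounds
`y' ≥ -c m - f⁺` (valid while `y ≤ m`) and `y' ≤ d x² + f⁻` (valid while `y ≥ m > 0`) over
`[t₁, t]`, an interval of length at most `T`.
-/

open Set Function MeasureTheory intervalIntegral

theorem Function.Periodic.intervalIntegral_deriv_eq_zero_s7 {g g' : ℝ → ℝ} {T : ℝ}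
    (hg : Periodic g T) (hderiv : ∀ t, HasDerivAt g (g' t) t)
    (hint : IntervalIntegrable g' volume 0 T) : ∫ t in 0..T, g' t = 0 := by
  rw [integral_eq_sub_of_hasDerivAt (fun t _ => hderiv t) hint,
    show g T = g 0 by simpa using hg 0, sub_self]

theorem Function.Periodic.intervalIntegral_sub_period_eq {g : ℝ → ℝ} {T : ℝ}
    (hg : Periodic g T) (t : ℝ) : ∫ s in (t - T)..t, g s = ∫ s in 0..T, g s := by
  simpa using hg.intervalIntegral_add_eq (t - T) 0

theorem Function.Periodic.setAverage_Ioc_eq {y : ℝ → ℝ} {T m : ℝ} (hy : Periodic y T)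
    (hT : 0 < T) (hint : ∫ s in 0..T, y s = m * T) (t : ℝ) :
    ⨍ s in Ioc (t - T) t, y s = m := by
  have h := interval_average_eq y (t - T) t
  rw [uIoc_of_le (by linarith), hy.intervalIntegral_sub_period_eq, hint] at h
  rw [h, smul_eq_mul, sub_sub_cancel]
  field_simp

theorem Function.Periodic.intervalIntegral_le_of_nonneg {q : ℝ → ℝ} {T t₁ t : ℝ}
    (hq : Periodic q T) (hqc : Continuous q) (hq0 : ∀ s, 0 ≤ q s) (h₁ : t - T ≤ t₁)
    (h₂ : t₁ ≤ t) : ∫ s in t₁..t, q s ≤ ∫ s in 0..T, q s :=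
  calc ∫ s in t₁..t, q s ≤ ∫ s in (t - T)..t, q s :=
        integral_mono_interval h₁ h₂ le_rfl (ae_of_all _ hq0) (hqc.intervalIntegrable _ _)
    _ = ∫ s in 0..T, q s := hq.intervalIntegral_sub_period_eq t

theorem exists_last_le_of_continuousOn {y : ℝ → ℝ} {a b m : ℝ} (hy : ContinuousOn y (Icc a b))
    (hab : a ≤ b) (ha : y a ≤ m) : ∃ c ∈ Icc a b, y c ≤ m ∧ ∀ s ∈ Ioc c b, m < y s := by
  set S := Icc a b ∩ y ⁻¹' Iic m
  have hS : IsClosed S := hy.preimage_isClosed_of_isClosed isClosed_Icc isClosed_Iic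
  have hSbdd : BddAbove S := bddAbove_Icc.mono inter_subset_left
  obtain ⟨⟨hac, hcb⟩, hyc⟩ := hS.csSup_mem ⟨a, left_mem_Icc.2 hab, ha⟩ hSbdd
  refine ⟨sSup S, ⟨hac, hcb⟩, hyc, fun s hs => ?_⟩
  by_contra! hys
  exact (le_csSup hSbdd ⟨⟨hac.trans hs.1.le, hs.2⟩, hys⟩).not_gt hs.1

theorem Function.Periodic.exists_mem_Ioc_le_and_ge {y : ℝ → ℝ} {T m : ℝ} (hy : Periodic y T)
    (hT : 0 < T) (hyc : Continuous y) (hint : ∫ s in 0..T, y s = m * T) (t : ℝ) :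
    (∃ s ∈ Ioc (t - T) t, y s ≤ m) ∧ ∃ s ∈ Ioc (t - T) t, m ≤ y s := by
  have hvol : volume (Ioc (t - T) t) ≠ 0 := by simp [hT]
  rw [← hy.setAverage_Ioc_eq hT hint t]
  exact ⟨exists_le_setAverage hvol measure_Ioc_lt_top.ne hyc.integrableOn_Ioc,
    exists_setAverage_le hvol measure_Ioc_lt_top.ne hyc.integrableOn_Ioc⟩

theorem le_add_integral_period_of_deriv_le_above {y y' q : ℝ → ℝ} {m t T s₀ : ℝ}
    (hy : ∀ s, HasDerivAt y (y' s) s) (hq : Periodic q T) (hqc : Continuous q)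
    (hq0 : ∀ s, 0 ≤ q s) (hs₀ : s₀ ∈ Icc (t - T) t) (hys₀ : y s₀ ≤ m)
    (hy'q : ∀ s, m < y s → y' s ≤ q s) : y t ≤ m + ∫ s in 0..T, q s := by
  have hyc : Continuous y := continuous_iff_continuousAt.2 fun s => (hy s).continuousAt
  obtain ⟨t₁, ⟨hs₀t₁, ht₁t⟩, hyt₁, hy_gt⟩ :=
    exists_last_le_of_continuousOn hyc.continuousOn hs₀.2 hys₀
  have hftc : y t - y t₁ ≤ ∫ s in t₁..t, q s :=
    sub_le_integral_of_hasDeriv_right_of_le ht₁t hyc.continuousOn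
      (fun s _ => (hy s).hasDerivWithinAt) hqc.integrableOn_Icc
      (fun s hs => hy'q s (hy_gt s (Ioo_subset_Ioc_self hs)))
  have hwindow := hq.intervalIntegral_le_of_nonneg hqc hq0 (hs₀.1.trans hs₀t₁) ht₁t
  linarith

theorem sub_integral_period_le_of_le_deriv_below {y y' q : ℝ → ℝ} {m t T s₀ : ℝ}
    (hy : ∀ s, HasDerivAt y (y' s) s) (hq : Periodic q T) (hqc : Continuous q)
    (hq0 : ∀ s, 0 ≤ q s) (hs₀ : s₀ ∈ Icc (t - T) t) (hys₀ : m ≤ y s₀)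
    (hy'q : ∀ s, y s < m → -q s ≤ y' s) : m - ∫ s in 0..T, q s ≤ y t := by
  have h := le_add_integral_period_of_deriv_le_above (y := fun s => -y s) (m := -m)
    (fun s => (hy s).neg) hq hqc hq0 hs₀ (neg_le_neg hys₀)
    fun s hs => neg_le.1 (hy'q s (neg_lt_neg_iff.1 hs))
  linarith

theorem intervalIntegral_eq_of_hasDerivAt_mul_sub_mul {a b T : ℝ} {x y : ℝ → ℝ} (hb : b ≠ 0)
    (hyc : Continuous y) (hx : ∀ t, HasDerivAt x (a * x t - b * x t * y t) t)
    (hxper : Periodic x T) (hx0 : ∀ t, x t ≠ 0) : ∫ t in 0..T, y t = a / b * T := by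
  have hlog (t : ℝ) : HasDerivAt (Real.log ∘ x) (a - b * y t) t := by
    have h := (hx t).log (hx0 t)
    rwa [show (a * x t - b * x t * y t) / x t = a - b * y t by field_simp [hx0 t]] at h
  have h := (hxper.comp Real.log).intervalIntegral_deriv_eq_zero_s7 hlog
    ((by fun_prop : Continuous fun t => a - b * y t).intervalIntegrable _ _)
  rw [integral_sub intervalIntegrable_const ((hyc.const_mul b).intervalIntegrable _ _),
    intervalIntegral.integral_const, intervalIntegral.integral_const_mul] at h
  simp only [sub_zero, smul_eq_mul] at h
  field_simp
  linarith

theorem intervalIntegral_mul_sq_eq {c d T : ℝ} {f x y : ℝ → ℝ} (hf : Continuous f)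
    (hxc : Continuous x) (hyc : Continuous y)
    (hy : ∀ t, HasDerivAt y (-c * y t + d * x t ^ 2 - f t) t) (hyper : Periodic y T)
    (hfmean : ∫ t in 0..T, f t = 0) : ∫ t in 0..T, d * x t ^ 2 = c * ∫ t in 0..T, y t := by
  have h := hyper.intervalIntegral_deriv_eq_zero_s7 hy
    ((by fun_prop : Continuous fun s => -c * y s + d * x s ^ 2 - f s).intervalIntegrable _ _)
  rw [integral_sub
      ((by fun_prop : Continuous fun s => -c * y s + d * x s ^ 2).intervalIntegrable _ _)
      (hf.intervalIntegrable _ _), integral_add ((hyc.const_mul _).intervalIntegrable _ _)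
      ((by fun_prop : Continuous fun s => d * x s ^ 2).intervalIntegrable _ _),
    intervalIntegral.integral_const_mul, hfmean] at h
  linarith

theorem stmt7 (a b c d T : ℝ) (ha : 0 < a) (hb : 0 < b) (hc : 0 < c) (hd : 0 < d)
    (hT : 0 < T) (f : ℝ → ℝ) (hf : Continuous f) (hfper : Function.Periodic f T)
    (hfmean : ∫ t in (0 : ℝ)..T, f t = 0)
    (x y : ℝ → ℝ)
    (hx : ∀ t, HasDerivAt x (a * x t - b * x t * y t) t)
    (hy : ∀ t, HasDerivAt y (-c * y t + d * (x t) ^ 2 - f t) t)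
    (hxper : Function.Periodic x T) (hyper : Function.Periodic y T)
    (hxpos : ∀ t, 0 < x t) :
    ∀ t,
      (a / b) * (1 - c * T) - (∫ s in (0 : ℝ)..T, max (f s) 0) ≤ y t ∧
      y t ≤ (a / b) * (1 + c * T) + (∫ s in (0 : ℝ)..T, max (-f s) 0) := by
  have hyc : Continuous y := continuous_iff_continuousAt.2 fun t => (hy t).continuousAt
  have hxc : Continuous x := continuous_iff_continuousAt.2 fun t => (hx t).continuousAt
  set m := a / b
  have hm : 0 < m := div_pos ha hb
  have hy_int : ∫ s in 0..T, y s = m * T :=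
    intervalIntegral_eq_of_hasDerivAt_mul_sub_mul hb.ne' hyc hx hxper fun t => (hxpos t).ne'
  have hsq_int := intervalIntegral_mul_sq_eq hf hxc hyc hy hyper hfmean
  have hbelow (s : ℝ) (hs : y s < m) :
      -(c * m + max (f s) 0) ≤ -c * y s + d * x s ^ 2 - f s := by
    linarith [mul_lt_mul_of_pos_left hs hc, le_max_left (f s) 0, mul_nonneg hd.le (sq_nonneg (x s))]
  have habove (s : ℝ) (hs : m < y s) :
      -c * y s + d * x s ^ 2 - f s ≤ d * x s ^ 2 + max (-f s) 0 := by
    linarith [mul_pos hc (hm.trans hs), le_max_left (-f s) 0]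
  intro t
  obtain ⟨⟨s₁, hs₁, hys₁⟩, s₂, hs₂, hys₂⟩ := hyper.exists_mem_Ioc_le_and_ge hT hyc hy_int t
  have hlow := sub_integral_period_le_of_le_deriv_below hy (fun s => by simp [hfper s])
    (by fun_prop) (fun s => by positivity) (Ioc_subset_Icc_self hs₂) hys₂ hbelow
  have hup := le_add_integral_period_of_deriv_le_above hy (fun s => by simp [hfper s, hxper s])
    (by fun_prop) (fun s => by positivity) (Ioc_subset_Icc_self hs₁) hys₁ habove
  rw [integral_add intervalIntegrable_const ((hf.max continuous_const).intervalIntegrable _ _),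
    intervalIntegral.integral_const, smul_eq_mul, sub_zero] at hlow
  rw [integral_add ((by fun_prop : Continuous fun s => d * x s ^ 2).intervalIntegrable _ _)
    ((by fun_prop : Continuous fun s => max (-f s) 0).intervalIntegrable _ _), hsq_int,
    hy_int] at hup
  constructor <;> linarith
end

section
/- Let z be a T-periodic C² solution of z'' + c·z' + b·d·exp(2z) = a·c + b·f(t) and let t₊ be a point where z attains its minimum over [0, T]. Then for all t ≥ t₊, z'(t) ≤ a·c·T + b·‖f⁺‖₁, where ‖f⁺‖₁ = ∫₀ᵀ max(f(s), 0) ds. -/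
/-!
Since `z' + c z` is a primitive of `g := z'' + c z'`, the equation gives
`z' t + c (z t - z t₊) = ∫_{t₊}^t g`, and `z' t₊ = 0`, `z t ≥ z t₊` at the global minimum `t₊`.
The function `g` is `T`-periodic with zero integral over a period, so its integral over any
interval equals its integral over a subinterval of length less than `T`; there `g` is bounded by
the nonnegative majorant `a c + b f⁺` read off from the equation.
-/

open Set MeasureTheory intervalIntegral

namespace Function.Periodic

theorem periodic_of_hasDerivAt_s8 {𝕜 F : Type*} [NontriviallyNormedField 𝕜] [NormedAddCommGroup F]
    [NormedSpace 𝕜 F] {z z' : 𝕜 → F} {T : 𝕜} (hz : Periodic z T)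
    (h : ∀ t, HasDerivAt z (z' t) t) : Periodic z' T := fun t => by
  have hshift := (h (t + T)).comp_add_const t T
  rw [show (fun u => z (u + T)) = z from funext hz] at hshift
  exact hshift.unique (h t)

theorem isMinOn_univ_of_isMinOn_Icc {α β : Type*} [AddCommGroup α] [LinearOrder α]
    [IsOrderedAddMonoid α] [Archimedean α] [Preorder β] {z : α → β} {T x : α}
    (hz : Periodic z T) (hT : 0 < T) (hmin : IsMinOn z (Icc 0 T) x) : IsMinOn z univ x := by
  refine isMinOn_univ_iff.2 fun s => ?_
  obtain ⟨y, hy, hsy⟩ := hz.exists_mem_Ico₀ hT s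
  exact hsy ▸ isMinOn_iff.1 hmin y (Ico_subset_Icc_self hy)

theorem intervalIntegral_toIcoMod_eq {g : ℝ → ℝ} {T : ℝ} (hT : 0 < T) (hg : Periodic g T)
    (hg0 : ∫ x in 0..T, g x = 0) (hgi : ∀ t₁ t₂, IntervalIntegrable g volume t₁ t₂)
    (t₀ t : ℝ) : ∫ x in t₀..t, g x = ∫ x in t₀..toIcoMod hT t₀ t, g x := by
  set v := toIcoMod hT t₀ t
  have hperiods : ∫ x in v..t, g x = 0 := by
    rw [← toIcoMod_add_toIcoDiv_zsmul hT t₀ t, hg.intervalIntegral_add_zsmul_eq _ _ hgi,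
      hg.intervalIntegral_add_eq _ 0, zero_add, hg0, smul_zero]
  rw [← integral_add_adjacent_intervals (hgi t₀ v) (hgi v t), hperiods, add_zero]

theorem intervalIntegral_le_integral_majorant {g p : ℝ → ℝ} {T : ℝ} (hT : 0 < T)
    (hg : Periodic g T) (hp : Periodic p T) (hg0 : ∫ x in 0..T, g x = 0)
    (hgi : ∀ t₁ t₂, IntervalIntegrable g volume t₁ t₂)
    (hpi : ∀ t₁ t₂, IntervalIntegrable p volume t₁ t₂) (hgp : ∀ x, g x ≤ p x)
    (hp0 : ∀ x, 0 ≤ p x) (t₀ t : ℝ) : ∫ x in t₀..t, g x ≤ ∫ x in 0..T, p x := by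
  obtain ⟨hv₀, hvT⟩ := toIcoMod_mem_Ico hT t₀ t
  calc ∫ x in t₀..t, g x = ∫ x in t₀..toIcoMod hT t₀ t, g x :=
        intervalIntegral_toIcoMod_eq hT hg hg0 hgi t₀ t
    _ ≤ ∫ x in t₀..toIcoMod hT t₀ t, p x :=
        integral_mono_on hv₀ (hgi _ _) (hpi _ _) fun x _ => hgp x
    _ ≤ ∫ x in t₀..t₀ + T, p x :=
        integral_mono_interval le_rfl hv₀ hvT.le (ae_of_all _ hp0) (hpi _ _)
    _ = ∫ x in 0..T, p x := by rw [hp.intervalIntegral_add_eq t₀ 0, zero_add]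

end Function.Periodic

theorem integral_add_const_mul_eq_sub {z z' z'' : ℝ → ℝ} (c t₀ t : ℝ)
    (hz1 : ∀ t, HasDerivAt z (z' t) t) (hz2 : ∀ t, HasDerivAt z' (z'' t) t)
    (hint : IntervalIntegrable (fun s => z'' s + c * z' s) volume t₀ t) :
    ∫ s in t₀..t, (z'' s + c * z' s) = z' t + c * z t - (z' t₀ + c * z t₀) :=
  integral_eq_sub_of_hasDerivAt (fun s _ => (hz2 s).add ((hz1 s).const_mul c)) hint

theorem le_integral_add_const_mul_of_isMinOn {z z' z'' : ℝ → ℝ} {c x : ℝ} (hc : 0 ≤ c)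
    (hz1 : ∀ t, HasDerivAt z (z' t) t) (hz2 : ∀ t, HasDerivAt z' (z'' t) t)
    (hmin : IsMinOn z univ x) (t : ℝ)
    (hint : IntervalIntegrable (fun s => z'' s + c * z' s) volume x t) :
    z' t ≤ ∫ s in x..t, (z'' s + c * z' s) := by
  have hz'x : z' x = 0 := (hmin.isLocalMin Filter.univ_mem).hasDerivAt_eq_zero (hz1 x)
  have hzt : 0 ≤ c * (z t - z x) := mul_nonneg hc (sub_nonneg.2 (isMinOn_univ_iff.1 hmin t))
  rw [integral_add_const_mul_eq_sub c x t hz1 hz2 hint, hz'x]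
  linarith

theorem stmt8_general (a b c d T : ℝ) (ha : 0 < a) (hb : 0 < b) (hc : 0 < c) (hd : 0 < d)
    (hT : 0 < T) (f : ℝ → ℝ) (hf : Continuous f) (hfper : Function.Periodic f T)
    (z z' z'' : ℝ → ℝ)
    (hz1 : ∀ t, HasDerivAt z (z' t) t)
    (hz2 : ∀ t, HasDerivAt z' (z'' t) t)
    (hz''cont : Continuous z'')
    (hzper : Function.Periodic z T)
    (heq : ∀ t, z'' t + c * z' t + b * d * Real.exp (2 * z t) = a * c + b * f t)
    (tmin : ℝ)
    (hmin : ∀ s ∈ Set.Icc (0 : ℝ) T, z tmin ≤ z s) :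
    ∀ t, tmin ≤ t → z' t ≤ a * c * T + b * ∫ s in (0 : ℝ)..T, max (f s) 0 := by
  intro t _
  have hz'per := hzper.periodic_of_hasDerivAt_s8 hz1
  have hz'c : Continuous z' := continuous_iff_continuousAt.2 fun s => (hz2 s).continuousAt
  have hgi (t₁ t₂ : ℝ) : IntervalIntegrable (fun s => z'' s + c * z' s) volume t₁ t₂ :=
    (hz''cont.add (continuous_const.mul hz'c)).intervalIntegrable _ _
  have hg0 : ∫ s in (0 : ℝ)..T, (z'' s + c * z' s) = 0 := by
    rw [integral_add_const_mul_eq_sub c 0 T hz1 hz2 (hgi 0 T), ← zero_add T, hz'per, hzper,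
      sub_self]
  have hgp (s : ℝ) : z'' s + c * z' s ≤ a * c + b * max (f s) 0 := by
    have := mul_le_mul_of_nonneg_left (le_max_left (f s) 0) hb.le
    have : 0 < b * d * Real.exp (2 * z s) := by positivity
    linarith [heq s]
  have hfpos : Continuous fun s => max (f s) 0 := by fun_prop
  have hpint : ∫ s in (0 : ℝ)..T, (a * c + b * max (f s) 0)
      = a * c * T + b * ∫ s in (0 : ℝ)..T, max (f s) 0 := by
    simp only [intervalIntegrable_const, hfpos.intervalIntegrable, IntervalIntegrable.const_mul,
      intervalIntegral.integral_add, intervalIntegral.integral_const_mul,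
      intervalIntegral.integral_const, sub_zero, smul_eq_mul, add_left_inj]
    ring
  calc z' t ≤ ∫ s in tmin..t, (z'' s + c * z' s) :=
        le_integral_add_const_mul_of_isMinOn hc.le hz1 hz2
          (hzper.isMinOn_univ_of_isMinOn_Icc hT hmin) t (hgi tmin t)
    _ ≤ ∫ s in (0 : ℝ)..T, (a * c + b * max (f s) 0) :=
        Function.Periodic.intervalIntegral_le_integral_majorant
          (p := fun s => a * c + b * max (f s) 0) hT
          (fun s => by simp only [hz'per s, hz'per.periodic_of_hasDerivAt_s8 hz2 s])
          (fun s => by simp only [hfper s]) hg0 hgi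
          (fun _ _ => (continuous_const.add (hfpos.const_mul b)).intervalIntegrable _ _) hgp
          (fun s => by positivity) tmin t
    _ = _ := hpint

theorem stmt8 (a b c d T : ℝ) (ha : 0 < a) (hb : 0 < b) (hc : 0 < c) (hd : 0 < d)
    (hT : 0 < T) (f : ℝ → ℝ) (hf : Continuous f) (hfper : Function.Periodic f T)
    (hfmean : ∫ t in (0 : ℝ)..T, f t = 0)
    (z z' z'' : ℝ → ℝ)
    (hz1 : ∀ t, HasDerivAt z (z' t) t)
    (hz2 : ∀ t, HasDerivAt z' (z'' t) t)
    (hz''cont : Continuous z'')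
    (hzper : Function.Periodic z T)
    (heq : ∀ t, z'' t + c * z' t + b * d * Real.exp (2 * z t) = a * c + b * f t)
    (tmin : ℝ) (htmin : tmin ∈ Set.Icc (0 : ℝ) T)
    (hmin : ∀ s ∈ Set.Icc (0 : ℝ) T, z tmin ≤ z s) :
    ∀ t, tmin ≤ t → z' t ≤ a * c * T + b * ∫ s in (0 : ℝ)..T, max (f s) 0 :=
  stmt8_general a b c d T ha hb hc hd hT f hf hfper z z' z'' hz1 hz2 hz''cont hzper heq tmin hmin
end

section
/- Let z be a T-periodic C² solution of z'' + c·z' + b·d·exp(2z) = a·c + b·f(t). Then for all t, z'(t) ≥ −a·c·T − b·‖f⁻‖₁, where ‖f⁻‖₁ = ∫₀ᵀ max(−f(s), 0) ds. -/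
/-!
Choose `t₀ ∈ [t - T, t]` where the periodic function `z` attains its global maximum, so that
`z'(t₀) = 0` and `z t ≤ z t₀`. Integrating the equation over `[t₀, t]` gives
`z'(t) + c (z t - z t₀) + b d ∫ exp(2z) = a c (t - t₀) + b ∫ f`. Integrating it over a full period
instead kills the derivative terms and, `f` having zero mean, gives `b d ∫₀ᵀ exp(2z) = a c T`, which
bounds the exponential term over the shorter interval `[t₀, t]`; the `f`-term is at least `-b ‖f⁻‖₁`.
-/

open Function Set intervalIntegral

theorem Function.Periodic.periodic_of_hasDerivAt_s9 {z z' : ℝ → ℝ} {T : ℝ} (hz : Periodic z T)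
    (hderiv : ∀ t, HasDerivAt z (z' t) t) : Periodic z' T := by
  intro t
  have hshift : HasDerivAt (fun x => z (x + T)) (z' (t + T)) t :=
    (hderiv (t + T)).comp_add_const t T
  rw [hz.funext] at hshift
  exact hshift.unique (hderiv t)

theorem Function.Periodic.exists_mem_Icc_forall_le {α : Type*} [LinearOrder α]
    [TopologicalSpace α] [ClosedIciTopology α] {z : ℝ → α} {T : ℝ} (hz : Periodic z T)
    (hT : 0 < T) (hzc : Continuous z) (t : ℝ) : ∃ t₀ ∈ Icc (t - T) t, ∀ s, z s ≤ z t₀ := by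
  obtain ⟨t₀, ht₀, hmax⟩ :=
    isCompact_Icc.exists_isMaxOn (nonempty_Icc.2 (by linarith : t - T ≤ t)) hzc.continuousOn
  refine ⟨t₀, ht₀, fun s => ?_⟩
  obtain ⟨y, ⟨hy_left, hy_right⟩, hzy⟩ := hz.exists_mem_Ico hT s (t - T)
  exact hzy ▸ hmax ⟨hy_left, by linarith⟩

theorem Function.Periodic.neg_integral_le_integral_max_neg_zero {f : ℝ → ℝ} {T u v : ℝ}
    (hf : Continuous f) (hfper : Periodic f T) (huv : u ≤ v) (hvu : v ≤ u + T) :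
    -∫ s in u..v, f s ≤ ∫ s in (0 : ℝ)..T, max (-f s) 0 := by
  have hcont : Continuous fun s => max (-f s) 0 := hf.neg.max continuous_const
  have hper : Periodic (fun s => max (-f s) 0) T := fun s => by simp only [hfper s]
  calc -∫ s in u..v, f s = ∫ s in u..v, -f s := integral_neg.symm
    _ ≤ ∫ s in u..v, max (-f s) 0 :=
        integral_mono_on huv (hf.neg.intervalIntegrable _ _) (hcont.intervalIntegrable _ _)
          fun s _ => le_max_left _ _
    _ ≤ ∫ s in u..u + T, max (-f s) 0 :=
        integral_mono_interval le_rfl huv hvu (MeasureTheory.ae_of_all _ fun s => le_max_right _ _)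
          (hcont.intervalIntegrable _ _)
    _ = ∫ s in (0 : ℝ)..T, max (-f s) 0 := by rw [hper.intervalIntegral_add_eq u 0, zero_add]

section SecondOrderEquation

variable {z z' z'' g h : ℝ → ℝ} {c : ℝ}

theorem integral_eq_of_second_order_equation (hz : ∀ t, HasDerivAt z (z' t) t)
    (hz' : ∀ t, HasDerivAt z' (z'' t) t) (hz''c : Continuous z'') (hg : Continuous g)
    (heq : ∀ t, z'' t + c * z' t + g t = h t) (u v : ℝ) :
    z' v - z' u + c * (z v - z u) + ∫ s in u..v, g s = ∫ s in u..v, h s := by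
  have hz'c : Continuous z' := continuous_iff_continuousAt.2 fun t => (hz' t).continuousAt
  have hz''_int : ∫ s in u..v, z'' s = z' v - z' u :=
    integral_eq_sub_of_hasDerivAt (fun t _ => hz' t) (hz''c.intervalIntegrable _ _)
  have hz'_int : ∫ s in u..v, z' s = z v - z u :=
    integral_eq_sub_of_hasDerivAt (fun t _ => hz t) (hz'c.intervalIntegrable _ _)
  simp only [← heq]
  rw [integral_add (f := fun s => z'' s + c * z' s)
      ((hz''c.add (hz'c.const_mul c)).intervalIntegrable _ _) (hg.intervalIntegrable _ _),
    integral_add (hz''c.intervalIntegrable _ _) ((hz'c.const_mul c).intervalIntegrable _ _),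
    integral_const_mul, hz''_int, hz'_int]

theorem integral_period_eq_of_second_order_equation {T : ℝ} (hzper : Periodic z T)
    (hz : ∀ t, HasDerivAt z (z' t) t) (hz' : ∀ t, HasDerivAt z' (z'' t) t)
    (hz''c : Continuous z'') (hg : Continuous g) (heq : ∀ t, z'' t + c * z' t + g t = h t)
    (t : ℝ) : ∫ s in t..t + T, g s = ∫ s in t..t + T, h s := by
  have := integral_eq_of_second_order_equation hz hz' hz''c hg heq t (t + T)
  rwa [hzper t, (hzper.periodic_of_hasDerivAt_s9 hz) t, sub_self, sub_self, mul_zero, zero_add,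
    zero_add] at this

end SecondOrderEquation

theorem stmt9 (a b c d T : ℝ) (ha : 0 < a) (hb : 0 < b) (hc : 0 < c) (hd : 0 < d)
    (hT : 0 < T) (f : ℝ → ℝ) (hf : Continuous f) (hfper : Function.Periodic f T)
    (hfmean : ∫ t in (0 : ℝ)..T, f t = 0)
    (z z' z'' : ℝ → ℝ)
    (hz1 : ∀ t, HasDerivAt z (z' t) t)
    (hz2 : ∀ t, HasDerivAt z' (z'' t) t)
    (hz''cont : Continuous z'')
    (hzper : Function.Periodic z T)
    (heq : ∀ t, z'' t + c * z' t + b * d * Real.exp (2 * z t) = a * c + b * f t) :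
    ∀ t, z' t ≥ -(a * c * T) - b * ∫ s in (0 : ℝ)..T, max (-f s) 0 := by
  intro t
  have hzc : Continuous z := continuous_iff_continuousAt.2 fun s => (hz1 s).continuousAt
  have hexp : Continuous fun s => b * d * Real.exp (2 * z s) := by fun_prop
  have hrhs (u v : ℝ) :
      ∫ s in u..v, (a * c + b * f s) = a * c * (v - u) + b * ∫ s in u..v, f s := by
    rw [integral_add intervalIntegrable_const ((hf.const_mul b).intervalIntegrable _ _),
      integral_const, integral_const_mul, smul_eq_mul, mul_comm (v - u)]
  obtain ⟨t₀, ⟨ht₀_left, ht₀_right⟩, hmax⟩ := hzper.exists_mem_Icc_forall_le hT hzc t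
  have hcrit : z' t₀ = 0 := IsLocalMax.hasDerivAt_eq_zero (.of_forall hmax) (hz1 t₀)
  have hmean : ∫ s in t₀..t₀ + T, b * d * Real.exp (2 * z s) = a * c * T := by
    rw [integral_period_eq_of_second_order_equation hzper hz1 hz2 hz''cont hexp heq, hrhs,
      hfper.intervalIntegral_add_eq t₀ 0, zero_add, hfmean]
    ring
  have hexp_le : ∫ s in t₀..t, b * d * Real.exp (2 * z s) ≤ a * c * T :=
    hmean ▸ integral_mono_interval le_rfl ht₀_right (by linarith)
      (MeasureTheory.ae_of_all _ fun s => by positivity) (hexp.intervalIntegrable _ _)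
  have hf_ge : b * -∫ s in t₀..t, f s ≤ b * ∫ s in (0 : ℝ)..T, max (-f s) 0 :=
    mul_le_mul_of_nonneg_left
      (hfper.neg_integral_le_integral_max_neg_zero hf ht₀_right (by linarith)) hb.le
  have hidentity := integral_eq_of_second_order_equation hz1 hz2 hz''cont hexp heq t₀ t
  rw [hrhs, hcrit] at hidentity
  have hz_drop : c * (z t - z t₀) ≤ 0 :=
    mul_nonpos_of_nonneg_of_nonpos hc.le (sub_nonpos.2 (hmax t))
  have hdrift : 0 ≤ a * c * (t - t₀) := by have := sub_nonneg.2 ht₀_right; positivity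
  linarith
end

section
/- Let c, T > 0, G(t, s) = exp(c(s−t))/(exp(cT) − 1), and f : ℝ → ℝ continuous and T-periodic with zero mean. Then for all t, v(t) := ∫ₜ^{t+T} G(t, s) f(s) ds satisfies v(t) ≤ ‖f‖₂ · √((exp(cT) + 1)/(2c·(exp(cT) − 1))), where ‖f‖₂ = (∫₀ᵀ f²)^{1/2}. -/
/-- Cauchy–Schwarz for interval integrals of continuous functions. -/
lemma cs_interval (a b : ℝ) (hab : a ≤ b) (g h : ℝ → ℝ) (hg : Continuous g)
    (hh : Continuous h) :
    (∫ s in a..b, g s * h s) ≤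
      Real.sqrt (∫ s in a..b, g s ^ 2) * Real.sqrt (∫ s in a..b, h s ^ 2) := by
  set A := ∫ s in a..b, g s ^ 2 with hAdef
  set B := ∫ s in a..b, g s * h s with hBdef
  set C := ∫ s in a..b, h s ^ 2 with hCdef
  have hA : 0 ≤ A := intervalIntegral.integral_nonneg hab (fun x _ => sq_nonneg _)
  have hC : 0 ≤ C := intervalIntegral.integral_nonneg hab (fun x _ => sq_nonneg _)
  have hig : IntervalIntegrable (fun s => g s ^ 2) MeasureTheory.volume a b :=
    (hg.pow 2).intervalIntegrable a b
  have hih : IntervalIntegrable (fun s => h s ^ 2) MeasureTheory.volume a b :=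
    (hh.pow 2).intervalIntegrable a b
  have high : IntervalIntegrable (fun s => g s * h s) MeasureTheory.volume a b :=
    (hg.mul hh).intervalIntegrable a b
  have key : discrim A (2 * B) C ≤ 0 := by
    apply discrim_le_zero
    intro x
    have hexp : A * (x * x) + 2 * B * x + C = ∫ s in a..b, (x * g s + h s) ^ 2 := by
      have : (∫ s in a..b, (x * g s + h s) ^ 2)
          = ∫ s in a..b, ((x * x) * g s ^ 2 + ((2 * x) * (g s * h s) + h s ^ 2)) := by
        congr 1; ext s; ring
      rw [this, intervalIntegral.integral_add ((hig.const_mul _))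
          (((high.const_mul _)).add hih),
        intervalIntegral.integral_add ((high.const_mul _)) hih,
        intervalIntegral.integral_const_mul, intervalIntegral.integral_const_mul]
      ring
    rw [hexp]
    exact intervalIntegral.integral_nonneg hab fun _ _ => sq_nonneg _
  have hB2 : B ^ 2 ≤ A * C := by
    rw [discrim] at key; nlinarith
  calc B ≤ |B| := le_abs_self B
    _ = Real.sqrt (B ^ 2) := (Real.sqrt_sq_eq_abs B).symm
    _ ≤ Real.sqrt (A * C) := Real.sqrt_le_sqrt hB2
    _ = Real.sqrt A * Real.sqrt C := Real.sqrt_mul hA _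

theorem stmt13 (c T : ℝ) (hc : 0 < c) (hT : 0 < T)
    (f : ℝ → ℝ) (hf : Continuous f) (hfper : Function.Periodic f T)
    (hfmean : ∫ t in (0 : ℝ)..T, f t = 0) :
    ∀ t, (∫ s in t..(t + T), Real.exp (c * (s - t)) / (Real.exp (c * T) - 1) * f s)
      ≤ Real.sqrt (∫ s in (0 : ℝ)..T, (f s) ^ 2) *
        Real.sqrt ((Real.exp (c * T) + 1) / (2 * c * (Real.exp (c * T) - 1))) := by
  intro t
  have hE1 : 1 < Real.exp (c * T) := by
    have h : (0:ℝ) < c * T := by positivity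
    simpa using Real.exp_lt_exp.2 h
  have hE0 : Real.exp (c * T) - 1 ≠ 0 := by linarith
  set E := Real.exp (c * T) with hEdef
  have hg : Continuous fun s => Real.exp (c * (s - t)) / (E - 1) :=
    ((Real.continuous_exp.comp (by fun_prop)).div_const _)
  have hab : t ≤ t + T := by linarith
  have hcs := cs_interval t (t + T) hab _ f hg hf
  -- the f²-integral over [t, t+T] equals the one over [0, T] by periodicity
  have hper2 : Function.Periodic (fun s => f s ^ 2) T := fun x => by simp [hfper x]
  have hf2 : (∫ s in t..(t + T), f s ^ 2) = ∫ s in (0 : ℝ)..T, f s ^ 2 := by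
    simpa using hper2.intervalIntegral_add_eq t 0
  -- compute the G²-integral
  have hGsq : (∫ s in t..(t + T), (Real.exp (c * (s - t)) / (E - 1)) ^ 2)
      = (E + 1) / (2 * c * (E - 1)) := by
    have h1 : (∫ s in t..(t + T), (Real.exp (c * (s - t)) / (E - 1)) ^ 2)
        = (E - 1)⁻¹ ^ 2 * ∫ s in t..(t + T), Real.exp (2 * c * (s - t)) := by
      rw [← intervalIntegral.integral_const_mul]
      congr 1; ext s
      have hx : Real.exp (c * (s - t)) ^ 2 = Real.exp (2 * c * (s - t)) := by
        rw [← Real.exp_nat_mul]; congr 1; push_cast; ring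
      rw [div_pow, hx, inv_pow, div_eq_mul_inv, mul_comm]
    have h2 : (∫ s in t..(t + T), Real.exp (2 * c * (s - t)))
        = ∫ s in (0 : ℝ)..T, Real.exp (2 * c * s) := by
      have := intervalIntegral.integral_comp_sub_right
        (fun u => Real.exp (2 * c * u)) t (a := t) (b := t + T)
      simpa using this
    have h3 : (∫ s in (0 : ℝ)..T, Real.exp (2 * c * s))
        = (Real.exp (2 * c * T) - 1) / (2 * c) := by
      rw [intervalIntegral.integral_comp_mul_left (fun u => Real.exp u)
        (by positivity : (2 : ℝ) * c ≠ 0)]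
      simp [integral_exp, div_eq_inv_mul, mul_comm]
    have hE2 : Real.exp (2 * c * T) = E * E := by
      rw [hEdef, ← Real.exp_add]; ring_nf
    rw [h1, h2, h3, hE2]
    field_simp
    ring
  rw [hGsq, hf2] at hcs
  linarith [hcs, mul_comm (Real.sqrt ((E + 1) / (2 * c * (E - 1))))
    (Real.sqrt (∫ s in (0 : ℝ)..T, f s ^ 2))]
end
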